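/- For any z ∈ ℂⁿ on the complex unit sphere, there exist η_z, δ_z > 0 such that for every unit vector y ∈ ℂⁿ with ‖y − z‖ ≤ δ_z, setting τ_k = |y_k|² − |z_k|², one has ‖τ‖₂^{3/2} ≤ η_z ‖diag(τ)y − (y* diag(τ) y) y‖₂. -/
import Mathlib

open Finset

set_option maxHeartbeats 1000000 in
/-- Key variance lower bound. -/
lemma key_var {n : ℕ} (τ w : Fin n → ℝ) (m sn : ℝ)
    (hm : 0 < m) (hsn1 : 1 ≤ sn) (hsnn : Real.sqrt n ≤ sn)
    (hw0 : ∀ k, 0 ≤ w k)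
    (hwτ : ∀ k, τ k ≤ w k)
    (hτm : ∀ k, τ k < 0 → m / 2 ≤ w k)
    (hsw : ∑ k, w k = 1)
    (hsτ : ∑ k, τ k = 0) :
    (m / (8 * sn)) * ((∑ k, τ k ^ 2) * Real.sqrt (∑ k, τ k ^ 2)) ≤
      ∑ k, (τ k - ∑ j, τ j * w j) ^ 2 * w k := by
  classical
  set g : ℝ := ∑ j, τ j * w j with hg
  have hVar0 : 0 ≤ ∑ k, (τ k - g) ^ 2 * w k :=
    Finset.sum_nonneg fun k _ => mul_nonneg (sq_nonneg _) (hw0 k)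
  by_cases hτ0 : ∀ k, τ k = 0
  · have hs0 : (∑ k, τ k ^ 2) = 0 := by
      refine Finset.sum_eq_zero fun k _ => by rw [hτ0 k]; ring
    rw [hs0]
    simpa using hVar0
  push_neg at hτ0
  obtain ⟨k₂, hk₂⟩ := hτ0
  set P : Finset (Fin n) := Finset.univ.filter (fun k => 0 < τ k) with hP
  set N : Finset (Fin n) := Finset.univ.filter (fun k => τ k < 0) with hN
  have hPmem : ∀ k, k ∈ P ↔ 0 < τ k := fun k => by simp [hP]
  have hNmem : ∀ k, k ∈ N ↔ τ k < 0 := fun k => by simp [hN]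
  have hNne : N.Nonempty := by
    by_contra hNe
    rw [Finset.not_nonempty_iff_eq_empty] at hNe
    have hnn : ∀ k ∈ Finset.univ, (0:ℝ) ≤ τ k := by
      intro k _
      by_contra hlt
      push_neg at hlt
      have : k ∈ N := (hNmem k).2 hlt
      simp [hNe] at this
    have := (Finset.sum_eq_zero_iff_of_nonneg hnn).1 hsτ
    exact hk₂ (this k₂ (Finset.mem_univ _))
  have hPne : P.Nonempty := by
    by_contra hPe
    rw [Finset.not_nonempty_iff_eq_empty] at hPe
    have hnp : ∀ k ∈ Finset.univ, τ k ≤ 0 := by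
      intro k _
      by_contra hlt
      push_neg at hlt
      have : k ∈ P := (hPmem k).2 hlt
      simp [hPe] at this
    have := (Finset.sum_eq_zero_iff_of_nonpos hnp).1 hsτ
    exact hk₂ (this k₂ (Finset.mem_univ _))
  have hdisj : Disjoint P N := by
    rw [Finset.disjoint_left]
    intro k hkP hkN
    exact absurd ((hPmem k).1 hkP) (not_lt.2 ((hNmem k).1 hkN).le)
  have hPNsub : P ∪ N ⊆ Finset.univ := Finset.subset_univ _
  have hzero : ∀ k ∈ Finset.univ, k ∉ P ∪ N → τ k = 0 := by
    intro k _ hk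
    rw [Finset.mem_union] at hk
    push_neg at hk
    have h1 := (hPmem k).not.1 (hk.1)
    have h2 := (hNmem k).not.1 (hk.2)
    push_neg at h1 h2
    linarith only [h1, h2]
  clear_value P N
  set A := ∑ k ∈ P, τ k ^ 2 with hA
  set B := ∑ k ∈ N, τ k ^ 2 with hB
  set T := ∑ k ∈ P, τ k with hT
  set U := ∑ k ∈ P, τ k ^ 3 with hU
  set s := ∑ k, τ k ^ 2 with hs
  have hApos : 0 < A := by
    rw [hA]
    refine Finset.sum_pos (fun k hk => ?_) hPne
    have := (hPmem k).1 hk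
    positivity
  have hBpos : 0 < B := by
    rw [hB]
    refine Finset.sum_pos (fun k hk => ?_) hNne
    have h := (hNmem k).1 hk
    nlinarith only [mul_pos_of_neg_of_neg h h]
  have hTpos : 0 < T := by
    rw [hT]
    exact Finset.sum_pos (fun k hk => (hPmem k).1 hk) hPne
  have hUpos : 0 < U := by
    rw [hU]
    refine Finset.sum_pos (fun k hk => ?_) hPne
    have := (hPmem k).1 hk
    positivity
  have hsAB : s = A + B := by
    rw [hs, hA, hB, ← Finset.sum_union hdisj]
    exact (Finset.sum_subset hPNsub fun k hk hk' => by rw [hzero k hk hk']; ring).symm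
  clear_value g A B T U s
  -- decompositions of g and Q
  set gP := ∑ k ∈ P, τ k * w k with hgP
  set gN := ∑ k ∈ N, τ k * w k with hgN
  have hgdec : g = gP + gN := by
    rw [hg, hgP, hgN, ← Finset.sum_union hdisj]
    exact (Finset.sum_subset hPNsub fun k hk hk' => by rw [hzero k hk hk']; ring).symm
  set SP := ∑ k ∈ P, τ k ^ 2 * w k with hSP
  set SN := ∑ k ∈ N, τ k ^ 2 * w k with hSN
  have hQdec : (∑ k, τ k ^ 2 * w k) = SP + SN := by
    rw [hSP, hSN, ← Finset.sum_union hdisj]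
    exact (Finset.sum_subset hPNsub fun k hk hk' => by rw [hzero k hk hk']; ring).symm
  set WP := ∑ k ∈ P, w k with hWP
  set WN := ∑ k ∈ N, w k with hWN
  -- variance identity
  have hVar : (∑ k, (τ k - g) ^ 2 * w k) = SP + SN - g ^ 2 := by
    have expand : ∀ k, (τ k - g) ^ 2 * w k
        = τ k ^ 2 * w k - 2 * g * (τ k * w k) + g ^ 2 * w k := fun k => by ring
    rw [Finset.sum_congr rfl fun k _ => expand k, Finset.sum_add_distrib,
      Finset.sum_sub_distrib, ← Finset.mul_sum, ← Finset.mul_sum, hsw, hQdec, ← hg]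
    ring
  -- Cauchy–Schwarz
  have hCS : ∀ (Q : Finset (Fin n)), (∑ k ∈ Q, τ k * w k) ^ 2 ≤
      (∑ k ∈ Q, w k) * (∑ k ∈ Q, τ k ^ 2 * w k) := by
    intro Q
    have h := Finset.sum_mul_sq_le_sq_mul_sq Q (fun k => Real.sqrt (w k))
      (fun k => Real.sqrt (w k) * τ k)
    have e1 : ∀ k, Real.sqrt (w k) * (Real.sqrt (w k) * τ k) = τ k * w k := by
      intro k
      rw [← mul_assoc, Real.mul_self_sqrt (hw0 k)]; ring
    have e2 : ∀ k, Real.sqrt (w k) ^ 2 = w k := fun k => Real.sq_sqrt (hw0 k)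
    have e3 : ∀ k, (Real.sqrt (w k) * τ k) ^ 2 = τ k ^ 2 * w k := by
      intro k
      rw [mul_pow, e2 k]; ring
    calc (∑ k ∈ Q, τ k * w k) ^ 2
        = (∑ k ∈ Q, Real.sqrt (w k) * (Real.sqrt (w k) * τ k)) ^ 2 := by
          rw [Finset.sum_congr rfl fun k _ => (e1 k).symm]
      _ ≤ (∑ k ∈ Q, Real.sqrt (w k) ^ 2) * (∑ k ∈ Q, (Real.sqrt (w k) * τ k) ^ 2) := h
      _ = (∑ k ∈ Q, w k) * (∑ k ∈ Q, τ k ^ 2 * w k) := by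
          rw [Finset.sum_congr rfl fun k _ => e2 k, Finset.sum_congr rfl fun k _ => e3 k]
  have hCSP : gP ^ 2 ≤ WP * SP := by rw [hgP, hWP, hSP]; exact hCS P
  have hCSN : gN ^ 2 ≤ WN * SN := by rw [hgN, hWN, hSN]; exact hCS N
  have hSPnn : 0 ≤ SP := by
    rw [hSP]; exact Finset.sum_nonneg fun k _ => mul_nonneg (sq_nonneg _) (hw0 k)
  have hSNnn : 0 ≤ SN := by
    rw [hSN]; exact Finset.sum_nonneg fun k _ => mul_nonneg (sq_nonneg _) (hw0 k)
  have hWPnn : 0 ≤ WP := by rw [hWP]; exact Finset.sum_nonneg fun k _ => hw0 k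
  have hWNnn : 0 ≤ WN := by rw [hWN]; exact Finset.sum_nonneg fun k _ => hw0 k
  have hWsum : WP + WN ≤ 1 := by
    rw [hWP, hWN, ← Finset.sum_union hdisj, ← hsw]
    exact Finset.sum_le_sum_of_subset_of_nonneg hPNsub fun k _ _ => hw0 k
  have hgPnn : 0 ≤ gP := by
    rw [hgP]
    exact Finset.sum_nonneg fun k hk => mul_nonneg ((hPmem k).1 hk).le (hw0 k)
  have hgNnp : gN ≤ 0 := by
    rw [hgN]
    exact Finset.sum_nonpos fun k hk =>
      mul_nonpos_of_nonpos_of_nonneg ((hNmem k).1 (by simpa using hk)).le (hw0 k)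
  have hWNm : m / 2 ≤ WN := by
    obtain ⟨k₁, hk₁⟩ := hNne
    rw [hWN]
    calc m / 2 ≤ w k₁ := hτm k₁ ((hNmem k₁).1 hk₁)
      _ ≤ ∑ k ∈ N, w k := Finset.single_le_sum (fun k _ => hw0 k) hk₁
  have hWPT : T ≤ WP := by
    rw [hT, hWP]; exact Finset.sum_le_sum fun k _ => hwτ k
  have hSPU : U ≤ SP := by
    rw [hU, hSP]
    refine Finset.sum_le_sum fun k hk => ?_
    have h := (hPmem k).1 hk
    have h2 := hwτ k
    nlinarith only [h, h2, sq_nonneg (τ k)]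
  have hSNB : m / 2 * B ≤ SN := by
    rw [hB, hSN, Finset.mul_sum]
    refine Finset.sum_le_sum fun k hk => ?_
    have h := hτm k ((hNmem k).1 hk)
    nlinarith only [h, sq_nonneg (τ k)]
  clear_value gP gN SP SN WP WN
  -- Main variance lower bound
  have hmain : m / 2 * (U + T * B) ≤ ∑ k, (τ k - g) ^ 2 * w k := by
    rw [hVar, hgdec]
    have h1 : (gP + gN) ^ 2 ≤ WP * SP + WN * SN := by
      nlinarith only [hCSP, hCSN, mul_nonpos_of_nonneg_of_nonpos hgPnn hgNnp]
    have h2 : WN * SP + WP * SN ≤ (1 - WP) * SP + (1 - WN) * SN := by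
      nlinarith only [hWsum, hSPnn, hSNnn, hWPnn, hWNnn]
    have h3 : m / 2 * U ≤ WN * SP :=
      le_trans (mul_le_mul_of_nonneg_left hSPU (by positivity))
        (mul_le_mul_of_nonneg_right hWNm hSPnn)
    have h4 : T * (m / 2 * B) ≤ WP * SN :=
      le_trans (mul_le_mul_of_nonneg_left hSNB hTpos.le)
        (mul_le_mul_of_nonneg_right hWPT hSNnn)
    linarith only [h1, h2, h3, h4]
  -- lower bounds on U and T*B
  have hsqA : 0 < Real.sqrt A := Real.sqrt_pos.2 hApos
  have hsqB : 0 < Real.sqrt B := Real.sqrt_pos.2 hBpos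
  have hCS3 : A ^ 2 ≤ T * U := by
    rw [hA, hT, hU]
    have h := Finset.sum_mul_sq_le_sq_mul_sq P (fun k => Real.sqrt (τ k))
      (fun k => τ k * Real.sqrt (τ k))
    have e1 : ∀ k ∈ P, Real.sqrt (τ k) * (τ k * Real.sqrt (τ k)) = τ k ^ 2 := by
      intro k hk
      have hτk := ((hPmem k).1 hk).le
      rw [show Real.sqrt (τ k) * (τ k * Real.sqrt (τ k))
          = (Real.sqrt (τ k) * Real.sqrt (τ k)) * τ k by ring,
        Real.mul_self_sqrt hτk]
      ring
    have e2 : ∀ k ∈ P, Real.sqrt (τ k) ^ 2 = τ k := fun k hk =>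
      Real.sq_sqrt ((hPmem k).1 hk).le
    have e3 : ∀ k ∈ P, (τ k * Real.sqrt (τ k)) ^ 2 = τ k ^ 3 := by
      intro k hk
      rw [mul_pow, Real.sq_sqrt ((hPmem k).1 hk).le]
      ring
    calc (∑ k ∈ P, τ k ^ 2) ^ 2
        = (∑ k ∈ P, Real.sqrt (τ k) * (τ k * Real.sqrt (τ k))) ^ 2 := by
          rw [Finset.sum_congr rfl e1]
      _ ≤ (∑ k ∈ P, Real.sqrt (τ k) ^ 2) * (∑ k ∈ P, (τ k * Real.sqrt (τ k)) ^ 2) := h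
      _ = (∑ k ∈ P, τ k) * (∑ k ∈ P, τ k ^ 3) := by
          rw [Finset.sum_congr rfl e2, Finset.sum_congr rfl e3]
  have hT2 : T ^ 2 ≤ (n : ℝ) * A := by
    rw [hT, hA]
    have h := sq_sum_le_card_mul_sum_sq (s := P) (f := τ)
    have hcard : (P.card : ℝ) ≤ (n : ℝ) := by
      exact_mod_cast Nat.cast_le.2 (le_trans (Finset.card_le_univ P)
        (le_of_eq (Fintype.card_fin n)))
    have hA' : (0:ℝ) ≤ ∑ k ∈ P, τ k ^ 2 := Finset.sum_nonneg fun k _ => sq_nonneg _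
    calc (∑ k ∈ P, τ k) ^ 2 ≤ (P.card : ℝ) * ∑ k ∈ P, τ k ^ 2 := h
      _ ≤ (n : ℝ) * ∑ k ∈ P, τ k ^ 2 := mul_le_mul_of_nonneg_right hcard hA'
  have hTsn : T ≤ sn * Real.sqrt A := by
    have hn' : (n : ℝ) ≤ sn ^ 2 := by
      have h := Real.sq_sqrt (Nat.cast_nonneg n : (0:ℝ) ≤ n)
      have h2 := Real.sqrt_nonneg (n:ℝ)
      nlinarith only [h, h2, hsnn]
    have h1 : T ^ 2 ≤ (sn * Real.sqrt A) ^ 2 := by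
      have e : (sn * Real.sqrt A) ^ 2 = sn ^ 2 * A := by
        rw [mul_pow, Real.sq_sqrt hApos.le]
      rw [e]
      calc T ^ 2 ≤ (n : ℝ) * A := hT2
        _ ≤ sn ^ 2 * A := mul_le_mul_of_nonneg_right hn' hApos.le
    exact le_of_pow_le_pow_left₀ two_ne_zero
      (mul_nonneg (le_trans zero_le_one hsn1) hsqA.le) h1
  have hUA : A * Real.sqrt A ≤ sn * U := by
    have h1 : A ^ 2 ≤ (sn * U) * Real.sqrt A := by
      calc A ^ 2 ≤ T * U := hCS3
        _ ≤ (sn * Real.sqrt A) * U := mul_le_mul_of_nonneg_right hTsn hUpos.le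
        _ = (sn * U) * Real.sqrt A := by ring
    have h2 : (A * Real.sqrt A) * Real.sqrt A = A ^ 2 := by
      rw [mul_assoc, Real.mul_self_sqrt hApos.le]
      ring
    have h3 : (A * Real.sqrt A) * Real.sqrt A ≤ (sn * U) * Real.sqrt A := by
      rw [h2]; exact h1
    exact le_of_mul_le_mul_right h3 hsqA
  have hTB : Real.sqrt B ≤ T := by
    have h : B ≤ T ^ 2 := by
      have he : ∀ k ∈ N, τ k ^ 2 = (-τ k) ^ 2 := fun k _ => by ring
      have hsum : T = ∑ k ∈ N, (-τ k) := by
        have h0 : T + ∑ k ∈ N, τ k = 0 := by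
          rw [hT, ← Finset.sum_union hdisj, ← hsτ]
          exact Finset.sum_subset hPNsub fun k hk hk' => hzero k hk hk'
        rw [Finset.sum_neg_distrib]
        linarith only [h0]
      rw [hB]
      calc (∑ k ∈ N, τ k ^ 2) = ∑ k ∈ N, (-τ k) ^ 2 := Finset.sum_congr rfl he
        _ ≤ (∑ k ∈ N, (-τ k)) ^ 2 :=
            Finset.sum_sq_le_sq_sum_of_nonneg fun k hk => by
              have := (hNmem k).1 hk
              linarith only [this]
        _ = T ^ 2 := by rw [← hsum]
    calc Real.sqrt B ≤ Real.sqrt (T ^ 2) := Real.sqrt_le_sqrt h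
      _ = T := Real.sqrt_sq hTpos.le
  have hsnpos0 : (0:ℝ) < sn := lt_of_lt_of_le zero_lt_one hsn1
  have hsum_lb : (A * Real.sqrt A + B * Real.sqrt B) / sn ≤ U + T * B := by
    have h1 : A * Real.sqrt A / sn ≤ U := by
      rw [div_le_iff₀ hsnpos0]
      linarith only [hUA, mul_comm U sn]
    have h2 : B * Real.sqrt B / sn ≤ T * B := by
      have hbb : 0 ≤ B * Real.sqrt B := mul_nonneg hBpos.le hsqB.le
      have ht : B * Real.sqrt B ≤ T * B :=  by
        linarith only [mul_le_mul_of_nonneg_right hTB hBpos.le,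
          mul_comm B (Real.sqrt B)]
      calc B * Real.sqrt B / sn ≤ B * Real.sqrt B := by
            rw [div_le_iff₀ hsnpos0]
            calc B * Real.sqrt B = B * Real.sqrt B * 1 := by ring
              _ ≤ B * Real.sqrt B * sn := mul_le_mul_of_nonneg_left hsn1 hbb
        _ ≤ T * B := ht
    calc (A * Real.sqrt A + B * Real.sqrt B) / sn
        = A * Real.sqrt A / sn + B * Real.sqrt B / sn := by ring
      _ ≤ U + T * B := add_le_add h1 h2
  -- s√s ≤ 4(A√A + B√B)
  have hs4 : s * Real.sqrt s ≤ 4 * (A * Real.sqrt A + B * Real.sqrt B) := by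
    rcases le_total A B with hAB | hAB
    · have h1 : s ≤ 2 * B := by rw [hsAB]; linarith only [hAB]
      have h2 : Real.sqrt s ≤ 2 * Real.sqrt B := by
        calc Real.sqrt s ≤ Real.sqrt (4 * B) :=
              Real.sqrt_le_sqrt (by linarith only [h1, hBpos])
          _ = 2 * Real.sqrt B := by
              rw [show (4:ℝ) * B = (2 * Real.sqrt B) ^ 2 by
                rw [mul_pow, Real.sq_sqrt hBpos.le]; norm_num]
              rw [Real.sqrt_sq (by positivity)]
      have hs0 : 0 ≤ s := by rw [hsAB]; positivity
      calc s * Real.sqrt s ≤ (2 * B) * (2 * Real.sqrt B) :=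
            mul_le_mul h1 h2 (Real.sqrt_nonneg s) (by linarith only [hBpos])
        _ = 4 * (B * Real.sqrt B) := by ring
        _ ≤ 4 * (A * Real.sqrt A + B * Real.sqrt B) := by
            nlinarith only [mul_nonneg hApos.le hsqA.le]
    · have h1 : s ≤ 2 * A := by rw [hsAB]; linarith only [hAB]
      have h2 : Real.sqrt s ≤ 2 * Real.sqrt A := by
        calc Real.sqrt s ≤ Real.sqrt (4 * A) :=
              Real.sqrt_le_sqrt (by linarith only [h1, hApos])
          _ = 2 * Real.sqrt A := by
              rw [show (4:ℝ) * A = (2 * Real.sqrt A) ^ 2 by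
                rw [mul_pow, Real.sq_sqrt hApos.le]; norm_num]
              rw [Real.sqrt_sq (by positivity)]
      have hs0 : 0 ≤ s := by rw [hsAB]; positivity
      calc s * Real.sqrt s ≤ (2 * A) * (2 * Real.sqrt A) :=
            mul_le_mul h1 h2 (Real.sqrt_nonneg s) (by linarith only [hApos])
        _ = 4 * (A * Real.sqrt A) := by ring
        _ ≤ 4 * (A * Real.sqrt A + B * Real.sqrt B) := by
            nlinarith only [mul_nonneg hBpos.le hsqB.le]
  -- finish
  calc (m / (8 * sn)) * (s * Real.sqrt s)
      ≤ (m / (8 * sn)) * (4 * (A * Real.sqrt A + B * Real.sqrt B)) := by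
        have h0 : 0 ≤ m / (8 * sn) := by positivity
        exact mul_le_mul_of_nonneg_left hs4 h0
    _ = (m / 2) * ((A * Real.sqrt A + B * Real.sqrt B) / sn) := by
        field_simp
        ring
    _ ≤ (m / 2) * (U + T * B) := by
        have h0 : 0 ≤ m / 2 := by positivity
        exact mul_le_mul_of_nonneg_left hsum_lb h0
    _ ≤ ∑ k, (τ k - g) ^ 2 * w k := hmain
open Finset

set_option maxHeartbeats 1000000 in
theorem stmt18 {n : ℕ} (z : Fin n → ℂ) (hz : ∑ k, ‖z k‖ ^ 2 = 1) :
    ∃ η δ : ℝ, 0 < η ∧ 0 < δ ∧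
      ∀ y : Fin n → ℂ, ∑ k, ‖y k‖ ^ 2 = 1 → ∑ k, ‖y k - z k‖ ^ 2 ≤ δ ^ 2 →
        (∑ k, (‖y k‖ ^ 2 - ‖z k‖ ^ 2) ^ 2) ^ ((3 : ℝ) / 4) ≤
          η * Real.sqrt (∑ k,
            ‖((‖y k‖ ^ 2 - ‖z k‖ ^ 2 : ℝ) : ℂ) * y k
              - ((∑ j, (‖y j‖ ^ 2 - ‖z j‖ ^ 2) * ‖y j‖ ^ 2 : ℝ) : ℂ) * y k‖ ^ 2) := by
  classical
  have hzne : ∃ k, z k ≠ 0 := by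
    by_contra h
    push_neg at h
    simp [h] at hz
  obtain ⟨k₀, hk₀⟩ := hzne
  have hn : 0 < n := k₀.pos
  set S : Finset (Fin n) := Finset.univ.filter (fun k => z k ≠ 0) with hSdef
  have hSne : S.Nonempty := ⟨k₀, by simp [hSdef, hk₀]⟩
  set m : ℝ := S.inf' hSne (fun k => ‖z k‖ ^ 2) with hmdef
  have hm_pos : 0 < m := by
    rw [hmdef, Finset.lt_inf'_iff]
    intro k hk
    have hk' : z k ≠ 0 := by simpa [hSdef] using hk
    exact pow_pos (norm_pos_iff.2 hk') 2
  have hm_le : ∀ k, z k ≠ 0 → m ≤ ‖z k‖ ^ 2 := by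
    intro k hk
    exact Finset.inf'_le _ (by simp [hSdef, hk])
  clear_value m
  have hsqn_pos : (0:ℝ) < Real.sqrt n := Real.sqrt_pos.2 (by exact_mod_cast hn)
  set C : ℝ := m / (8 * Real.sqrt n) with hCdef
  have hC_pos : 0 < C := by rw [hCdef]; positivity
  refine ⟨(Real.sqrt C)⁻¹, m / 8, by positivity, by positivity, ?_⟩
  intro y hy hyd
  -- rewrite the RHS sum
  have hVar_eq : (∑ k,
      ‖((‖y k‖ ^ 2 - ‖z k‖ ^ 2 : ℝ) : ℂ) * y k
        - ((∑ j, (‖y j‖ ^ 2 - ‖z j‖ ^ 2) * ‖y j‖ ^ 2 : ℝ) : ℂ) * y k‖ ^ 2)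
      = ∑ k, ((‖y k‖ ^ 2 - ‖z k‖ ^ 2)
          - ∑ j, (‖y j‖ ^ 2 - ‖z j‖ ^ 2) * ‖y j‖ ^ 2) ^ 2 * ‖y k‖ ^ 2 := by
    refine Finset.sum_congr rfl fun k _ => ?_
    rw [← sub_mul, ← Complex.ofReal_sub, norm_mul, Complex.norm_real,
      Real.norm_eq_abs, mul_pow, sq_abs]
  rw [hVar_eq]
  -- hypotheses for the key lemma
  have hterm : ∀ k, ‖y k - z k‖ ≤ m / 8 := by
    intro k
    have h1 : ‖y k - z k‖ ^ 2 ≤ (m / 8) ^ 2 :=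
      le_trans (Finset.single_le_sum (f := fun k => ‖y k - z k‖ ^ 2)
        (fun k _ => by positivity) (Finset.mem_univ k)) hyd
    nlinarith [norm_nonneg (y k - z k), hm_pos]
  have hy1 : ∀ k, ‖y k‖ ≤ 1 := by
    intro k
    have h1 : ‖y k‖ ^ 2 ≤ 1 :=
      le_trans (Finset.single_le_sum (f := fun k => ‖y k‖ ^ 2)
        (fun k _ => by positivity) (Finset.mem_univ k)) hy.le
    nlinarith [norm_nonneg (y k)]
  have hz1 : ∀ k, ‖z k‖ ≤ 1 := by
    intro k
    have h1 : ‖z k‖ ^ 2 ≤ 1 :=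
      le_trans (Finset.single_le_sum (f := fun k => ‖z k‖ ^ 2)
        (fun k _ => by positivity) (Finset.mem_univ k)) hz.le
    nlinarith [norm_nonneg (z k)]
  have habs : ∀ k, |‖y k‖ ^ 2 - ‖z k‖ ^ 2| ≤ m / 4 := by
    intro k
    have h1 : |‖y k‖ - ‖z k‖| ≤ ‖y k - z k‖ := abs_norm_sub_norm_le _ _
    have h2 : |‖y k‖ ^ 2 - ‖z k‖ ^ 2| = |‖y k‖ - ‖z k‖| * (‖y k‖ + ‖z k‖) := by
      rw [show ‖y k‖ ^ 2 - ‖z k‖ ^ 2 = (‖y k‖ - ‖z k‖) * (‖y k‖ + ‖z k‖) by ring,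
        abs_mul, abs_of_nonneg (add_nonneg (norm_nonneg (y k)) (norm_nonneg (z k)))]
    have h3 := hterm k
    have h4 := hy1 k
    have h5 := hz1 k
    have h6 := norm_nonneg (y k)
    have h7 := norm_nonneg (z k)
    have h8 := abs_nonneg (‖y k‖ - ‖z k‖)
    nlinarith
  have hτm : ∀ k, ‖y k‖ ^ 2 - ‖z k‖ ^ 2 < 0 → m / 2 ≤ ‖y k‖ ^ 2 := by
    intro k hk
    have hzk : z k ≠ 0 := by
      intro h
      rw [h] at hk
      simp at hk
      nlinarith [norm_nonneg (y k), sq_nonneg ‖y k‖, hk]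
    have h1 := hm_le k hzk
    have h2 := (abs_le.1 (habs k)).1
    linarith
  have hsτ : ∑ k, (‖y k‖ ^ 2 - ‖z k‖ ^ 2) = 0 := by
    rw [Finset.sum_sub_distrib, hy, hz]
    ring
  have hkey := key_var (fun k => ‖y k‖ ^ 2 - ‖z k‖ ^ 2) (fun k => ‖y k‖ ^ 2)
    m (Real.sqrt n) hm_pos
    (by
      rw [show (1:ℝ) = Real.sqrt 1 from Real.sqrt_one.symm]
      exact Real.sqrt_le_sqrt (by exact_mod_cast hn))
    le_rfl
    (fun k => by show (0:ℝ) ≤ ‖y k‖ ^ 2; positivity)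
    (fun k => by
      show ‖y k‖ ^ 2 - ‖z k‖ ^ 2 ≤ ‖y k‖ ^ 2
      nlinarith only [sq_nonneg ‖z k‖])
    hτm hy hsτ
  -- conclude
  set s := ∑ k, (‖y k‖ ^ 2 - ‖z k‖ ^ 2) ^ 2 with hsdef
  set V := ∑ k, ((‖y k‖ ^ 2 - ‖z k‖ ^ 2)
      - ∑ j, (‖y j‖ ^ 2 - ‖z j‖ ^ 2) * ‖y j‖ ^ 2) ^ 2 * ‖y k‖ ^ 2 with hVdef
  have hkey' : C * (s * Real.sqrt s) ≤ V := by
    rw [hCdef, hsdef, hVdef]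
    exact hkey
  clear_value s V
  have hs0 : 0 ≤ s := by
    rw [hsdef]
    positivity
  have hV0 : 0 ≤ V := by
    rw [hVdef]
    positivity
  have e1 : s * Real.sqrt s = s ^ ((3:ℝ)/2) := by
    rw [Real.sqrt_eq_rpow]
    nth_rewrite 1 [← Real.rpow_one s]
    rw [← Real.rpow_add' hs0 (by norm_num)]
    norm_num
  have h34 : s ^ ((3:ℝ)/4) = Real.sqrt (s * Real.sqrt s) := by
    rw [e1, Real.sqrt_eq_rpow, ← Real.rpow_mul hs0]
    norm_num
  have h1 : s * Real.sqrt s ≤ V / C := by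
    rw [le_div_iff₀ hC_pos]
    linarith [hkey', mul_comm C (s * Real.sqrt s)]
  calc s ^ ((3:ℝ)/4) = Real.sqrt (s * Real.sqrt s) := h34
    _ ≤ Real.sqrt (V / C) := Real.sqrt_le_sqrt h1
    _ = Real.sqrt V / Real.sqrt C := Real.sqrt_div hV0 C
    _ = (Real.sqrt C)⁻¹ * Real.sqrt V := by rw [div_eq_mul_inv, mul_comm]
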